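/- There exist constants c₁, c₂ > 0, independent of H ∈ [H_−, H_+] and k ∈ ℕ* ∪ {∞}, such that for all λ with 0 < |λ| ≤ π, c₁ |λ|^{1−2H} ≤ f_{H,k}(λ) ≤ c₂ |λ|^{1−2H}, where f_{H,k} is the spectral density of the pre-averaged fractional Brownian motion increment sequence. -/

import Mathlib

open Real

/-- `f_{H,k}(λ) = Γ(2H+1) sin(πH) Σ_{j∈ℤ} (1-cos λ)²/(k² sin²(λ/(2k)+πj/k)) |λ+2πj|^{-(1+2H)}`. -/
noncomputable def fHk (H : ℝ) (k : ℕ) (l : ℝ) : ℝ :=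
  Real.Gamma (2 * H + 1) * Real.sin (π * H) *
    ∑' j : ℤ, (1 - Real.cos l) ^ 2 / ((k : ℝ) ^ 2 * Real.sin (l / (2 * k) + π * j / k) ^ 2)
      * |l + 2 * π * j| ^ (-(1 + 2 * H))

/-- `f_{H,∞}(λ) = 4 Γ(2H+1) sin(πH) (1-cos λ)² Σ_{j∈ℤ} |λ+2πj|^{-(3+2H)}`. -/
noncomputable def fHinf (H l : ℝ) : ℝ :=
  4 * Real.Gamma (2 * H + 1) * Real.sin (π * H) * (1 - Real.cos l) ^ 2 *
    ∑' j : ℤ, |l + 2 * π * j| ^ (-(3 + 2 * H))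

/-! Both densities are `Γ(2H+1) sin(πH) Σⱼ (1 - cos λ)² / Dⱼ · |λ + 2πj|^{-(1+2H)}` with
`Dⱼ ≥ λ²/π²` for every `j` and `D₀ ≤ λ²/4`; for finite `k` the first bound comes from
`|sin x| ≥ (2/π) dist(x, πℤ)`, since `λ/(2k) + πj/k` is at distance at least `|λ|/(2k)` from `πℤ`.
As `1 - cos λ ≍ λ²` on `[-π, π]`, the `j = 0` term alone is `≍ |λ|^{1-2H}`, while the whole sum
is at most `λ² (|λ|^{-(1+2H)} + Σ_{j ≠ 0} |j|^{-(1+2H₋)}) = O(|λ|^{1-2H})`. The prefactor is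
continuous and positive on the compact interval `[H₋, H₊]`, hence bounded above and below. -/

lemma two_pi_mul_abs_sub_le_abs_add (l : ℝ) (n : ℤ) :
    2 * π * |(n : ℝ)| - |l| ≤ |l + 2 * π * n| := by
  have h := abs_sub_abs_le_abs_sub (2 * π * (n : ℝ)) (-l)
  rwa [abs_mul, abs_of_pos (by positivity : (0 : ℝ) < 2 * π), abs_neg, sub_neg_eq_add,
    add_comm] at h

lemma abs_le_abs_add_two_pi_mul {l : ℝ} (hl : |l| ≤ π) (n : ℤ) : |l| ≤ |l + 2 * π * n| := by
  rcases eq_or_ne n 0 with rfl | hn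
  · simp
  · have h1 : (1 : ℝ) ≤ |(n : ℝ)| := by exact_mod_cast Int.one_le_abs hn
    nlinarith [two_pi_mul_abs_sub_le_abs_add l n, pi_pos]

lemma abs_int_le_abs_add_two_pi_mul {l : ℝ} (hl : |l| ≤ π) (n : ℤ) :
    |(n : ℝ)| ≤ |l + 2 * π * n| := by
  rcases eq_or_ne n 0 with rfl | hn
  · simp
  · have h1 : (1 : ℝ) ≤ |(n : ℝ)| := by exact_mod_cast Int.one_le_abs hn
    nlinarith [two_pi_mul_abs_sub_le_abs_add l n, pi_gt_three]

lemma mul_le_abs_sin_of_le_abs_sub_int_mul_pi {x c : ℝ} (h : ∀ n : ℤ, c ≤ |x - n * π|) :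
    2 / π * c ≤ |sin x| := by
  set n : ℤ := round (x / π)
  have hn : |x - n * π| ≤ π / 2 := by
    have h' : x - n * π = (x / π - n) * π := by field_simp
    rw [h', abs_mul, abs_of_pos pi_pos]
    nlinarith [abs_sub_round (x / π), pi_pos]
  calc 2 / π * c ≤ 2 / π * |x - n * π| := by gcongr; exact h n
    _ ≤ |sin (x - n * π)| := mul_abs_le_abs_sin hn
    _ = |sin x| := by rw [sin_sub_int_mul_pi, abs_mul, abs_neg_one_zpow, one_mul]

lemma sq_div_pi_sq_le_mul_sin_sq {l : ℝ} (hl : |l| ≤ π) {k : ℕ} (hk : 1 ≤ k) (j : ℤ) :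
    l ^ 2 / π ^ 2 ≤ (k : ℝ) ^ 2 * sin (l / (2 * k) + π * j / k) ^ 2 := by
  have hk0 : (0 : ℝ) < k := by exact_mod_cast hk
  have hdist : ∀ n : ℤ, |l| / (2 * k) ≤ |(l / (2 * k) + π * j / k) - n * π| := by
    intro n
    have h : (l / (2 * k) + π * j / k) - n * π =
        (l + 2 * π * ((j - k * n : ℤ) : ℝ)) / (2 * k) := by
      push_cast
      field_simp
      ring
    rw [h, abs_div, abs_of_pos (by positivity : (0 : ℝ) < 2 * k)]
    exact div_le_div_of_nonneg_right (abs_le_abs_add_two_pi_mul hl _) (by positivity)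
  have hsin := mul_le_abs_sin_of_le_abs_sub_int_mul_pi hdist
  calc l ^ 2 / π ^ 2 = k ^ 2 * (2 / π * (|l| / (2 * k))) ^ 2 := by
        rw [← sq_abs l]; field_simp
    _ ≤ (k : ℝ) ^ 2 * sin (l / (2 * k) + π * j / k) ^ 2 := by
        rw [← sq_abs (sin _)]; gcongr

lemma sq_mul_sin_sq_div_le (l k : ℝ) : k ^ 2 * sin (l / (2 * k)) ^ 2 ≤ l ^ 2 / 4 := by
  rcases eq_or_ne k 0 with rfl | hk
  · simp only [ne_eq, OfNat.ofNat_ne_zero, not_false_eq_true, zero_pow, zero_mul]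
    positivity
  · calc k ^ 2 * sin (l / (2 * k)) ^ 2 ≤ k ^ 2 * (l / (2 * k)) ^ 2 :=
          mul_le_mul_of_nonneg_left sin_sq_le_sq (sq_nonneg k)
      _ = l ^ 2 / 4 := by field_simp; ring

lemma rpow_neg_abs_add_two_pi_mul_le {l s t : ℝ} (hl : |l| ≤ π) (ht : 0 ≤ t) (hts : t ≤ s)
    {j : ℤ} (hj : j ≠ 0) : |l + 2 * π * j| ^ (-s) ≤ |(j : ℝ)| ^ (-t) := by
  have hj1 : (1 : ℝ) ≤ |(j : ℝ)| := by exact_mod_cast Int.one_le_abs hj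
  calc |l + 2 * π * j| ^ (-s) ≤ |(j : ℝ)| ^ (-s) :=
        rpow_le_rpow_of_nonpos (by positivity) (abs_int_le_abs_add_two_pi_mul hl j) (by linarith)
    _ ≤ |(j : ℝ)| ^ (-t) := rpow_le_rpow_of_exponent_le hj1 (by linarith)

lemma summable_rpow_neg_abs_add_two_pi_mul {l s : ℝ} (hl : |l| ≤ π) (hs : 1 < s) :
    Summable fun j : ℤ => |l + 2 * π * j| ^ (-s) := by
  refine (summable_abs_int_rpow hs).of_norm_bounded_eventually ?_
  filter_upwards [Filter.eventually_cofinite_ne 0] with j hj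
  rw [norm_of_nonneg (by positivity)]
  exact rpow_neg_abs_add_two_pi_mul_le hl (by linarith) le_rfl hj

lemma tsum_rpow_neg_abs_add_two_pi_mul_le {l s t : ℝ} (hl : |l| ≤ π) (ht : 1 < t) (hts : t ≤ s) :
    ∑' j : ℤ, |l + 2 * π * j| ^ (-s) ≤ |l| ^ (-s) + ∑' j : ℤ, |(j : ℝ)| ^ (-t) := by
  have hdom : ∀ j : ℤ, (if j = 0 then 0 else |l + 2 * π * j| ^ (-s)) ≤ |(j : ℝ)| ^ (-t) := by
    intro j
    split_ifs with hj
    · positivity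
    · exact rpow_neg_abs_add_two_pi_mul_le hl (by linarith) hts hj
  have hsum := summable_abs_int_rpow ht
  rw [(summable_rpow_neg_abs_add_two_pi_mul hl (by linarith)).tsum_eq_add_tsum_ite 0]
  push_cast
  rw [mul_zero, add_zero]
  have hsum_ite := hsum.of_nonneg_of_le (fun j => by split_ifs <;> positivity) hdom
  exact add_le_add_right (hsum_ite.tsum_le_tsum hdom hsum) _

lemma IsCompact.exists_pos_bounds_of_continuousOn {α : Type*} [TopologicalSpace α] {s : Set α}
    {f : α → ℝ} (hs : IsCompact s) (hf : ContinuousOn f s) (hpos : ∀ x ∈ s, 0 < f x) :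
    ∃ m M : ℝ, 0 < m ∧ 0 < M ∧ ∀ x ∈ s, m ≤ f x ∧ f x ≤ M := by
  rcases s.eq_empty_or_nonempty with rfl | hne
  · exact ⟨1, 1, one_pos, one_pos, by simp⟩
  obtain ⟨a, ha, hmin⟩ := hs.exists_isMinOn hne hf
  obtain ⟨b, hb, hmax⟩ := hs.exists_isMaxOn hne hf
  exact ⟨f a, f b, hpos a ha, hpos b hb, fun x hx => ⟨hmin hx, hmax hx⟩⟩

lemma continuousOn_Gamma_two_mul_add_one_mul_sin :
    ContinuousOn (fun H => Gamma (2 * H + 1) * sin (π * H)) (Set.Ioi (-(1 / 2))) := by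
  refine continuousOn_of_forall_continuousAt fun H hH => ContinuousAt.mul ?_ (by fun_prop)
  have hGamma : ContinuousAt Gamma (2 * H + 1) := by
    refine (differentiableAt_Gamma fun m hm => ?_).continuousAt
    have : (0 : ℝ) ≤ m := m.cast_nonneg
    linarith [Set.mem_Ioi.mp hH]
  exact hGamma.comp (f := fun H : ℝ => 2 * H + 1) (by fun_prop)

lemma Gamma_two_mul_add_one_mul_sin_pos {H : ℝ} (hH0 : 0 < H) (hH1 : H < 1) :
    0 < Gamma (2 * H + 1) * sin (π * H) :=
  mul_pos (Gamma_pos_of_pos (by linarith))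
    (sin_pos_of_pos_of_lt_pi (by positivity) (by nlinarith [pi_pos]))

lemma exists_pos_bounds_Gamma_two_mul_add_one_mul_sin {Hm Hp : ℝ} (h0 : 0 < Hm) (h1 : Hp < 1) :
    ∃ m M : ℝ, 0 < m ∧ 0 < M ∧ ∀ H ∈ Set.Icc Hm Hp,
      m ≤ Gamma (2 * H + 1) * sin (π * H) ∧ Gamma (2 * H + 1) * sin (π * H) ≤ M :=
  isCompact_Icc.exists_pos_bounds_of_continuousOn
    (continuousOn_Gamma_two_mul_add_one_mul_sin.mono fun H hH => by
      simp only [Set.mem_Ioi]; linarith [hH.1])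
    fun H hH => Gamma_two_mul_add_one_mul_sin_pos (h0.trans_le hH.1) (hH.2.trans_lt h1)

lemma sq_mul_rpow_neg_one_add {x : ℝ} (hx : 0 < x) (H : ℝ) :
    x ^ 2 * x ^ (-(1 + 2 * H)) = x ^ (1 - 2 * H) := by
  rw [← rpow_natCast, ← rpow_add hx]
  ring_nf

lemma two_mul_sq_div_pi_sq_le_one_sub_cos {l : ℝ} (hl : |l| ≤ π) :
    2 * l ^ 2 / π ^ 2 ≤ 1 - cos l := by
  linarith [cos_le_one_sub_mul_cos_sq hl, mul_div_right_comm 2 (l ^ 2) (π ^ 2)]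

noncomputable def spectralSum (H l : ℝ) (D : ℤ → ℝ) : ℝ :=
  ∑' j : ℤ, (1 - cos l) ^ 2 / D j * |l + 2 * π * j| ^ (-(1 + 2 * H))

section spectralSum

variable {H l : ℝ} {D : ℤ → ℝ}

lemma one_sub_cos_sq_div_le {d : ℝ} (hl0 : l ≠ 0) (hd : l ^ 2 / π ^ 2 ≤ d) :
    (1 - cos l) ^ 2 / d ≤ π ^ 2 * l ^ 2 / 4 := by
  have hcos : (1 - cos l) ^ 2 ≤ (l ^ 2 / 2) ^ 2 :=
    pow_le_pow_left₀ (by linarith [cos_le_one l])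
      (by linarith [one_sub_sq_div_two_le_cos (x := l)]) 2
  calc (1 - cos l) ^ 2 / d ≤ (l ^ 2 / 2) ^ 2 / (l ^ 2 / π ^ 2) :=
        div_le_div₀ (by positivity) hcos (by positivity) hd
    _ = π ^ 2 * l ^ 2 / 4 := by field_simp; ring

lemma spectralSum_term_nonneg (hl0 : l ≠ 0) (hD : ∀ j, l ^ 2 / π ^ 2 ≤ D j) (j : ℤ) :
    0 ≤ (1 - cos l) ^ 2 / D j * |l + 2 * π * j| ^ (-(1 + 2 * H)) :=
  mul_nonneg (div_nonneg (sq_nonneg _) ((by positivity : 0 < l ^ 2 / π ^ 2).le.trans (hD j)))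
    (by positivity)

lemma summable_spectralSum_term (hl0 : l ≠ 0) (hl : |l| ≤ π) (hH : 0 < H)
    (hD : ∀ j, l ^ 2 / π ^ 2 ≤ D j) :
    Summable fun j : ℤ => (1 - cos l) ^ 2 / D j * |l + 2 * π * j| ^ (-(1 + 2 * H)) :=
  ((summable_rpow_neg_abs_add_two_pi_mul hl (by linarith)).mul_left
    (π ^ 2 * l ^ 2 / 4)).of_nonneg_of_le (spectralSum_term_nonneg hl0 hD) fun j =>
      mul_le_mul_of_nonneg_right (one_sub_cos_sq_div_le hl0 (hD j)) (by positivity)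

lemma le_spectralSum (hl0 : l ≠ 0) (hl : |l| ≤ π) (hH : 0 < H) (hD : ∀ j, l ^ 2 / π ^ 2 ≤ D j)
    (hD0 : D 0 ≤ l ^ 2 / 4) : 16 / π ^ 4 * |l| ^ (1 - 2 * H) ≤ spectralSum H l D := by
  have hcos : (2 * l ^ 2 / π ^ 2) ^ 2 ≤ (1 - cos l) ^ 2 :=
    pow_le_pow_left₀ (by positivity) (two_mul_sq_div_pi_sq_le_one_sub_cos hl) 2
  have hterm0 : 16 / π ^ 4 * l ^ 2 ≤ (1 - cos l) ^ 2 / D 0 :=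
    calc 16 / π ^ 4 * l ^ 2 = (2 * l ^ 2 / π ^ 2) ^ 2 / (l ^ 2 / 4) := by field_simp; ring
      _ ≤ (1 - cos l) ^ 2 / D 0 :=
        div_le_div₀ (by positivity) hcos ((by positivity : 0 < l ^ 2 / π ^ 2).trans_le (hD 0)) hD0
  calc 16 / π ^ 4 * |l| ^ (1 - 2 * H) = 16 / π ^ 4 * l ^ 2 * |l| ^ (-(1 + 2 * H)) := by
        rw [← sq_abs l, mul_assoc, sq_mul_rpow_neg_one_add (abs_pos.mpr hl0)]
    _ ≤ (1 - cos l) ^ 2 / D 0 * |l| ^ (-(1 + 2 * H)) := by gcongr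
    _ ≤ spectralSum H l D := by
        simpa [spectralSum] using (summable_spectralSum_term hl0 hl hH hD).le_tsum 0 fun j _ =>
          spectralSum_term_nonneg hl0 hD j

lemma spectralSum_le {Hm : ℝ} (hl0 : l ≠ 0) (hl : |l| ≤ π) (hHm : 0 < Hm) (hH : Hm ≤ H)
    (hH1 : H ≤ 1) (hD : ∀ j, l ^ 2 / π ^ 2 ≤ D j) :
    spectralSum H l D ≤
      π ^ 2 / 4 * (1 + (∑' j : ℤ, |(j : ℝ)| ^ (-(1 + 2 * Hm))) * π ^ 3) * |l| ^ (1 - 2 * H) := by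
  set C := ∑' j : ℤ, |(j : ℝ)| ^ (-(1 + 2 * Hm))
  have hl0' : 0 < |l| := abs_pos.mpr hl0
  have hlattice : ∑' j : ℤ, |l + 2 * π * j| ^ (-(1 + 2 * H)) ≤ |l| ^ (-(1 + 2 * H)) + C :=
    tsum_rpow_neg_abs_add_two_pi_mul_le hl (by linarith) (by linarith)
  have hsq : |l| ^ 2 ≤ π ^ 3 * |l| ^ (1 - 2 * H) := by
    have hsplit : |l| ^ 2 = |l| ^ (1 + 2 * H) * |l| ^ (1 - 2 * H) := by
      rw [← rpow_add hl0', ← rpow_natCast]; norm_num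
    have hpow : |l| ^ (1 + 2 * H) ≤ π ^ (3 : ℝ) :=
      (rpow_le_rpow (abs_nonneg l) hl (by linarith)).trans
        (rpow_le_rpow_of_exponent_le (by linarith [pi_gt_three]) (by linarith))
    rw [hsplit, ← rpow_natCast π 3]
    exact mul_le_mul_of_nonneg_right (by exact_mod_cast hpow) (by positivity)
  have hC : 0 ≤ C := tsum_nonneg fun j => by positivity
  calc spectralSum H l D ≤ ∑' j : ℤ, π ^ 2 * l ^ 2 / 4 * |l + 2 * π * j| ^ (-(1 + 2 * H)) :=
        (summable_spectralSum_term hl0 hl (by linarith) hD).tsum_le_tsum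
          (fun j => mul_le_mul_of_nonneg_right (one_sub_cos_sq_div_le hl0 (hD j)) (by positivity))
          ((summable_rpow_neg_abs_add_two_pi_mul hl (by linarith)).mul_left _)
    _ ≤ π ^ 2 * l ^ 2 / 4 * (|l| ^ (-(1 + 2 * H)) + C) := by
        rw [tsum_mul_left]; gcongr
    _ = π ^ 2 / 4 * (|l| ^ (1 - 2 * H) + C * |l| ^ 2) := by
        rw [← sq_abs l, ← sq_mul_rpow_neg_one_add hl0']; ring
    _ ≤ π ^ 2 / 4 * (|l| ^ (1 - 2 * H) + C * (π ^ 3 * |l| ^ (1 - 2 * H))) := by gcongr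
    _ = π ^ 2 / 4 * (1 + C * π ^ 3) * |l| ^ (1 - 2 * H) := by ring

lemma mul_spectralSum_two_sided_bounds {Hm G m M : ℝ} (hl0 : l ≠ 0) (hl : |l| ≤ π) (hHm : 0 < Hm)
    (hH : Hm ≤ H) (hH1 : H ≤ 1) (hD : ∀ j, l ^ 2 / π ^ 2 ≤ D j) (hD0 : D 0 ≤ l ^ 2 / 4)
    (hm : 0 < m) (hmG : m ≤ G) (hGM : G ≤ M) :
    m * (16 / π ^ 4) * |l| ^ (1 - 2 * H) ≤ G * spectralSum H l D ∧
      G * spectralSum H l D ≤ M * (π ^ 2 / 4 *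
        (1 + (∑' j : ℤ, |(j : ℝ)| ^ (-(1 + 2 * Hm))) * π ^ 3)) * |l| ^ (1 - 2 * H) := by
  have hlow := le_spectralSum hl0 hl (hHm.trans_le hH) hD hD0
  have hup := spectralSum_le hl0 hl hHm hH hH1 hD
  have hG : 0 < G := hm.trans_le hmG
  rw [mul_assoc, mul_assoc M]
  exact ⟨mul_le_mul hmG hlow (by positivity) hG.le,
    mul_le_mul hGM hup ((by positivity : (0 : ℝ) ≤ _).trans hlow) (hG.trans_le hGM).le⟩

end spectralSum

lemma fHk_eq (H : ℝ) (k : ℕ) (l : ℝ) :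
    fHk H k l = Gamma (2 * H + 1) * sin (π * H) *
      spectralSum H l fun j => (k : ℝ) ^ 2 * sin (l / (2 * k) + π * j / k) ^ 2 :=
  rfl

/-- `(λ + 2πj)² / 4` is the `k → ∞` limit of the denominator `k² sin²(λ/(2k) + πj/k)` of `fHk`. -/
lemma fHinf_eq (H : ℝ) {l : ℝ} (hl0 : l ≠ 0) (hl : |l| ≤ π) :
    fHinf H l = Gamma (2 * H + 1) * sin (π * H) *
      spectralSum H l fun j => (l + 2 * π * j) ^ 2 / 4 := by
  rw [fHinf, spectralSum, ← tsum_mul_left, ← tsum_mul_left]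
  congr 1
  funext j
  set x := l + 2 * π * j
  have hx : 0 < |x| := (abs_pos.mpr hl0).trans_le (abs_le_abs_add_two_pi_mul hl j)
  have hpow : |x| ^ (-(1 + 2 * H)) = |x| ^ 2 * |x| ^ (-(3 + 2 * H)) := by
    rw [← rpow_natCast, ← rpow_add hx]
    ring_nf
  rw [hpow, ← sq_abs x]
  field_simp

lemma sq_div_pi_sq_le_sq_add_two_pi_mul_div_four {l : ℝ} (hl : |l| ≤ π) (j : ℤ) :
    l ^ 2 / π ^ 2 ≤ (l + 2 * π * j) ^ 2 / 4 :=
  calc l ^ 2 / π ^ 2 ≤ l ^ 2 / 4 := by gcongr; nlinarith [pi_gt_three]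
    _ ≤ (l + 2 * π * j) ^ 2 / 4 := by
      rw [← sq_abs l, ← sq_abs (l + _)]
      gcongr ?_ ^ 2 / 4
      exact abs_le_abs_add_two_pi_mul hl j

theorem fHk_two_sided_bounds_general (Hm Hp : ℝ) (h0 : 0 < Hm) (h1 : Hp < 1) :
    ∃ c₁ c₂ : ℝ, 0 < c₁ ∧ 0 < c₂ ∧
      ∀ H ∈ Set.Icc Hm Hp, ∀ l : ℝ, 0 < |l| → |l| ≤ π →
        (∀ k : ℕ, 1 ≤ k →
          c₁ * |l| ^ (1 - 2 * H) ≤ fHk H k l ∧ fHk H k l ≤ c₂ * |l| ^ (1 - 2 * H)) ∧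
        (c₁ * |l| ^ (1 - 2 * H) ≤ fHinf H l ∧ fHinf H l ≤ c₂ * |l| ^ (1 - 2 * H)) := by
  obtain ⟨m, M, hm, hM, hGamma⟩ := exists_pos_bounds_Gamma_two_mul_add_one_mul_sin h0 h1
  set C := ∑' j : ℤ, |(j : ℝ)| ^ (-(1 + 2 * Hm))
  have hC : 0 ≤ C := tsum_nonneg fun j => by positivity
  refine ⟨m * (16 / π ^ 4), M * (π ^ 2 / 4 * (1 + C * π ^ 3)), by positivity, by positivity,
    fun H hH l hl0 hl => ?_⟩
  have hl0 : l ≠ 0 := abs_pos.mp hl0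
  obtain ⟨hmG, hGM⟩ := hGamma H hH
  have hbounds {D : ℤ → ℝ} (hD : ∀ j, l ^ 2 / π ^ 2 ≤ D j) (hD0 : D 0 ≤ l ^ 2 / 4) :=
    mul_spectralSum_two_sided_bounds hl0 hl h0 hH.1 (by linarith [hH.2]) hD hD0 hm hmG hGM
  refine ⟨fun k hk => ?_, ?_⟩
  · rw [fHk_eq]
    exact hbounds (sq_div_pi_sq_le_mul_sin_sq hl hk) (by simpa using sq_mul_sin_sq_div_le l k)
  · rw [fHinf_eq H hl0 hl]
    exact hbounds (sq_div_pi_sq_le_sq_add_two_pi_mul_div_four hl) (by simp)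

/-- There are constants `c₁, c₂ > 0`, uniform in `H ∈ [H₋, H₊]` and `k ∈ ℕ* ∪ {∞}`,
such that `c₁ |λ|^{1-2H} ≤ f_{H,k}(λ) ≤ c₂ |λ|^{1-2H}` for all `0 < |λ| ≤ π`. -/
theorem fHk_two_sided_bounds (Hm Hp : ℝ) (h0 : 0 < Hm) (hmp : Hm ≤ Hp) (h1 : Hp < 1) :
    ∃ c₁ c₂ : ℝ, 0 < c₁ ∧ 0 < c₂ ∧
      ∀ H ∈ Set.Icc Hm Hp, ∀ l : ℝ, 0 < |l| → |l| ≤ π →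
        (∀ k : ℕ, 1 ≤ k →
          c₁ * |l| ^ (1 - 2 * H) ≤ fHk H k l ∧ fHk H k l ≤ c₂ * |l| ^ (1 - 2 * H)) ∧
        (c₁ * |l| ^ (1 - 2 * H) ≤ fHinf H l ∧ fHinf H l ≤ c₂ * |l| ^ (1 - 2 * H)) :=
  fHk_two_sided_bounds_general Hm Hp h0 h1
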